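/- arXiv:2209.11568 — 4 statements merged into one kernel-verified Lean document; each statement's English description precedes it below -/
import Mathlib

section
/- If f : X → Y is a quasi embedding of partial orders, then the map M(f) : M(X) → M(Y) sending [x₀,…,x_{k−1}] to [f(x₀),…,f(x_{k−1})] is a quasi embedding with respect to the Dershowitz–Manna multiset orders; moreover, if f is an order embedding then so is M(f). -/
/-- The Dershowitz–Manna order on finite multisets (functions `X →₀ ℕ`). -/
def DMLE {X : Type*} [PartialOrder X] (σ τ : X →₀ ℕ) : Prop :=
  ∀ x ∈ (σ - τ).support, ∃ y ∈ (τ - σ).support, x < y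

lemma mapDomain_sub_of_inj {X Y : Type*} (f : X → Y) (hinj : Function.Injective f)
    (σ τ : X →₀ ℕ) :
    σ.mapDomain f - τ.mapDomain f = (σ - τ).mapDomain f := by
  ext y
  by_cases h : y ∈ Set.range f
  · obtain ⟨x, rfl⟩ := h
    simp [Finsupp.mapDomain_apply hinj, Finsupp.tsub_apply]
  · simp [Finsupp.mapDomain_notin_range _ _ h, Finsupp.tsub_apply]

theorem stmt_5 {X Y : Type*} [PartialOrder X] [PartialOrder Y]
    (f : X → Y) (hinj : Function.Injective f) (hf : ∀ x x', f x ≤ f x' → x ≤ x') :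
    (∀ σ τ : X →₀ ℕ,
        DMLE (σ.mapDomain f) (τ.mapDomain f) → DMLE σ τ) ∧
      ((∀ x x', x ≤ x' ↔ f x ≤ f x') →
        ∀ σ τ : X →₀ ℕ, DMLE σ τ ↔ DMLE (σ.mapDomain f) (τ.mapDomain f)) := by
  classical
  have hrefl : ∀ σ τ : X →₀ ℕ,
      DMLE (σ.mapDomain f) (τ.mapDomain f) → DMLE σ τ := by
    intro σ τ h x hx
    have hx' : f x ∈ (σ.mapDomain f - τ.mapDomain f).support := by
      rw [mapDomain_sub_of_inj f hinj,
        Finsupp.mapDomain_support_of_injective hinj]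
      exact Finset.mem_image_of_mem f hx
    obtain ⟨y, hy, hlt⟩ := h (f x) hx'
    rw [mapDomain_sub_of_inj f hinj,
      Finsupp.mapDomain_support_of_injective hinj] at hy
    obtain ⟨x', hx'', rfl⟩ := Finset.mem_image.1 hy
    refine ⟨x', hx'', lt_of_le_of_ne (hf _ _ hlt.le) ?_⟩
    rintro rfl
    exact hlt.ne rfl
  refine ⟨hrefl, fun hiff σ τ => ⟨fun h y hy => ?_, hrefl σ τ⟩⟩
  rw [mapDomain_sub_of_inj f hinj,
    Finsupp.mapDomain_support_of_injective hinj] at hy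
  obtain ⟨x, hx, rfl⟩ := Finset.mem_image.1 hy
  obtain ⟨x', hx', hlt⟩ := h x hx
  refine ⟨f x', ?_, lt_of_le_of_ne ((hiff _ _).1 hlt.le) (fun he => hlt.ne (hinj he))⟩
  rw [mapDomain_sub_of_inj f hinj,
    Finsupp.mapDomain_support_of_injective hinj]
  exact Finset.mem_image_of_mem f hx'
end

section
/- There is a quasi embedding from M(X) with the Dershowitz–Manna multiset order into Seq(X) with the Higman order; consequently, if Seq(X) is a well partial order then so is M(X). In particular, if X is a well partial order, then M(X) is a well partial order. -/
/-!
The embedding lists a multiset in any order. A Higman embedding of `σ` into `τ` maps the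
elements of `σ` above `x` injectively to elements of `τ` above `x`, so every cone `{y | x ≤ y}`
holds at least as many elements of `τ` as of `σ`. If `x` has more copies in `σ` than in `τ`,
the cone above `x` must therefore contain some `y > x` with more copies in `τ` than in `σ`.
-/

/-- The Higman order on finite sequences over a partial order. -/
def HigmanLE {X : Type*} [PartialOrder X] (s t : List X) : Prop :=
  ∃ f : Fin s.length → Fin t.length, StrictMono f ∧ ∀ i, s.get i ≤ t.get (f i)

theorem List.SublistForall₂.countP_le {α : Type*} {R : α → α → Prop} {p : α → Bool}
    (hp : ∀ a b, R a b → p a → p b) {l₁ l₂ : List α} (h : SublistForall₂ R l₁ l₂) :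
    l₁.countP p ≤ l₂.countP p := by
  induction h with
  | nil => simp
  | @cons a b _ _ hab _ ih =>
    have hpab := hp a b hab
    simp only [countP_cons]
    split_ifs <;> simp_all; omega
  | cons_right _ ih => exact ih.trans (sublist_cons_self _ _).countP_le

section

variable {X : Type*} [PartialOrder X]

theorem HigmanLE.sublistForall₂ {s t : List X}
    (h : HigmanLE s t) : List.SublistForall₂ (· ≤ ·) s t := by
  obtain ⟨f, hf, hle⟩ := h
  refine List.sublistForall₂_iff.2 ⟨List.ofFn (t.get ∘ f), ?_, ?_⟩
  · exact List.forall₂_iff_get.2 ⟨by simp, fun i h₁ _ => by simpa using hle ⟨i, h₁⟩⟩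
  · exact List.sublist_iff_exists_fin_orderEmbedding_get_eq.2
      ⟨(Fin.castOrderIso (List.length_ofFn ..)).toOrderEmbedding.trans
        (OrderEmbedding.ofStrictMono f hf), fun _ => by simp [Fin.cast]⟩

theorem dmle_of_countP_le [DecidableLE X] {σ τ : X →₀ ℕ}
    (h : ∀ x, σ.toMultiset.countP (x ≤ ·) ≤ τ.toMultiset.countP (x ≤ ·)) : DMLE σ τ := by
  classical
  intro x hx
  rw [Finsupp.mem_support_iff, Finsupp.tsub_apply, Nat.sub_ne_zero_iff_lt] at hx
  by_contra! hτσ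
  simp only [Finsupp.mem_support_iff, Finsupp.tsub_apply, ne_eq, Nat.sub_eq_zero_iff_le,
    not_imp_not] at hτσ
  have hle : τ.toMultiset.filter (x ≤ ·) ≤ σ.toMultiset.filter (x ≤ ·) := by
    refine Multiset.le_iff_count.2 fun y => ?_
    simp only [Multiset.count_filter, Finsupp.count_toMultiset]
    split_ifs with hxy
    · rcases hxy.eq_or_lt with rfl | hlt
      exacts [hx.le, hτσ y hlt]
    · rfl
  have hne : τ.toMultiset.filter (x ≤ ·) ≠ σ.toMultiset.filter (x ≤ ·) := fun heq => by
    simpa [Multiset.count_filter, Finsupp.count_toMultiset, hx.ne] using congrArg (·.count x) heq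
  have hcard := h x
  rw [Multiset.countP_eq_card_filter, Multiset.countP_eq_card_filter] at hcard
  exact hcard.not_gt (Multiset.card_lt_card (lt_of_le_of_ne hle hne))

theorem dmle_of_sublistForall₂ {σ τ : X →₀ ℕ}
    (h : List.SublistForall₂ (· ≤ ·) σ.toMultiset.toList τ.toMultiset.toList) : DMLE σ τ := by
  classical
  refine dmle_of_countP_le fun x => ?_
  have := h.countP_le (p := fun y => decide (x ≤ y)) fun a b hab hxa => by
    simpa using (of_decide_eq_true hxa).trans hab
  rwa [← Multiset.coe_countP, ← Multiset.coe_countP, Multiset.coe_toList,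
    Multiset.coe_toList] at this

end

theorem WellQuasiOrdered.of_reflect {α β : Type*} {r : α → α → Prop} {s : β → β → Prop}
    (hs : WellQuasiOrdered s) (f : α → β) (hf : ∀ a b, s (f a) (f b) → r a b) :
    WellQuasiOrdered r := fun g =>
  let ⟨m, n, hmn, h⟩ := hs (f ∘ g)
  ⟨m, n, hmn, hf _ _ h⟩

theorem WellQuasiOrdered.sublistForall₂ {α : Type*} {r : α → α → Prop} [IsPreorder α r]
    (h : WellQuasiOrdered r) : WellQuasiOrdered (List.SublistForall₂ r) := by
  have := (Set.partiallyWellOrderedOn_univ_iff.2 h).partiallyWellOrderedOn_sublistForall₂ r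
  exact Set.partiallyWellOrderedOn_univ_iff.1 (by simpa using this)

theorem stmt_6 {X : Type*} [PartialOrder X] :
    (∃ e : (X →₀ ℕ) → List X, ∀ σ τ, HigmanLE (e σ) (e τ) → DMLE σ τ) ∧
      ((∀ s : ℕ → List X, ∃ i j, i < j ∧ HigmanLE (s i) (s j)) →
        ∀ s : ℕ → (X →₀ ℕ), ∃ i j, i < j ∧ DMLE (s i) (s j)) ∧
      ((∀ s : ℕ → X, ∃ i j, i < j ∧ s i ≤ s j) →
        ∀ s : ℕ → (X →₀ ℕ), ∃ i j, i < j ∧ DMLE (s i) (s j)) := by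
  have hembed : ∀ σ τ : X →₀ ℕ,
      HigmanLE σ.toMultiset.toList τ.toMultiset.toList → DMLE σ τ :=
    fun _ _ h => dmle_of_sublistForall₂ h.sublistForall₂
  refine ⟨⟨_, hembed⟩, fun hwqo => WellQuasiOrdered.of_reflect hwqo _ hembed, fun hwqo => ?_⟩
  exact (WellQuasiOrdered.sublistForall₂ (r := (· ≤ ·)) hwqo).of_reflect _
    fun _ _ => dmle_of_sublistForall₂
end

section
/- Let T be a partial order and h : T → ℕ a function with the property that h(s) < h(t) implies s < t. If for every n the suborder {s ∈ T | h(s) < n} is a well partial order (contains no bad sequence), then T itself is a well partial order. -/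
theorem stmt_14 {T : Type*} [PartialOrder T] (h : T → ℕ)
    (hh : ∀ s t : T, h s < h t → s < t)
    (hlev : ∀ n : ℕ, ∀ s : ℕ → T, (∀ i, h (s i) < n) → ∃ i j, i < j ∧ s i ≤ s j) :
    ∀ s : ℕ → T, ∃ i j, i < j ∧ s i ≤ s j := by
  intro s
  by_cases hc : ∃ i j, i < j ∧ h (s i) < h (s j)
  · obtain ⟨i, j, hij, hlt⟩ := hc
    exact ⟨i, j, hij, (hh _ _ hlt).le⟩
  · push_neg at hc
    apply hlev (h (s 0) + 1) s
    intro i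
    rcases Nat.eq_zero_or_pos i with rfl | hi
    · omega
    · have := hc 0 i hi
      omega
end

section
/- If X is a partial order, A ⊆ X a suborder, and ≤' a partial order on A extending the restriction of ≤_X to A, then there exists a partial order on X extending both ≤_X and ≤'. -/
theorem stmt_17 {X : Type*} [PartialOrder X] (A : Set X)
    (r : A → A → Prop) (hr : IsPartialOrder A r)
    (hext : ∀ a b : A, (a : X) ≤ (b : X) → r a b) :
    ∃ R : X → X → Prop, IsPartialOrder X R ∧
      (∀ x y : X, x ≤ y → R x y) ∧ (∀ a b : A, r a b → R a b) := by
  refine ⟨fun x y => x ≤ y ∨ ∃ a b : A, x ≤ a ∧ r a b ∧ (b : X) ≤ y, { refl := fun x => Or.inl le_rfl, antisymm := ?_, trans := ?_ }, fun x y h => Or.inl h, fun a b h => Or.inr ⟨a, b, le_rfl, h, le_rfl⟩⟩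
  ·
    rintro x y z (hxy | ⟨a, b, hxa, hab, hby⟩) (hyz | ⟨c, d, hyc, hcd, hdz⟩)
    · exact Or.inl (hxy.trans hyz)
    · exact Or.inr ⟨c, d, hxy.trans hyc, hcd, hdz⟩
    · exact Or.inr ⟨a, b, hxa, hab, hby.trans hyz⟩
    · have hbc : r b c := hext b c (hby.trans hyc)
      exact Or.inr ⟨a, d, hxa, hr.trans a b d hab (hr.trans b c d hbc hcd), hdz⟩
  · -- antisymm
    rintro x y (hxy | ⟨a, b, hxa, hab, hby⟩) hyx
    · rcases hyx with hyx | ⟨c, d, hyc, hcd, hdx⟩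
      · exact le_antisymm hxy hyx
      · have : r d c := hext d c (hdx.trans (hxy.trans hyc))
        have hcd' : c = d := hr.antisymm c d hcd this
        have : (c : X) = d := congrArg _ hcd'
        exact le_antisymm hxy (hyc.trans (this ▸ hdx))
    · rcases hyx with hyx | ⟨c, d, hyc, hcd, hdx⟩
      · have : r b a := hext b a (hby.trans (hyx.trans hxa))
        have hab' : a = b := hr.antisymm a b hab this
        have : (a : X) = b := congrArg _ hab'
        exact le_antisymm (hxa.trans (this ▸ hby)) hyx
      · have hbc : r b c := hext b c (hby.trans hyc)
        have hda : r d a := hext d a (hdx.trans hxa)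
        have h1 : r a c := hr.trans a b c hab hbc
        have h2 : r c a := hr.trans c d a hcd hda
        have hac : a = c := hr.antisymm a c h1 h2
        have hab2 : a = b := hr.antisymm a b hab (hr.trans b c a hbc h2)
        have hcd2 : c = d := hr.antisymm c d hcd (hr.trans d a c hda h1)
        have e1 : (a : X) = b := congrArg _ hab2
        have e2 : (c : X) = d := congrArg _ hcd2
        exact le_antisymm (hxa.trans (e1 ▸ hby)) (hyc.trans (e2 ▸ hdx))
end
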